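/- Assume k₁ < 2αB. Define x* : (0,∞) → ℝ by x*(y) = y^{-1/γ} for 0 < y ≤ k₁, x*(y) = -y/(2α) for k₁ < y ≤ 2αB, and x*(y) = -B for y > 2αB, and for β > 0 set g(β) = ∫_ℝ e^t · x*(β e^t) dμ(t). Then g is continuous and strictly decreasing on (0,∞), lim_{β→0+} g(β) = +∞ and lim_{β→∞} g(β) = -B·e^{M + V²/2}. Consequently, for every Y₀ > -B·e^{M + V²/2} there exists a unique β* ∈ (0,∞) with g(β*) = Y₀. -/

import Mathlib

open Real MeasureTheory ProbabilityTheory Filter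
open scoped NNReal ENNReal

lemma gauss_exp_pdf (c Mm : ℝ) {v : ℝ≥0} (hv : v ≠ 0) (x : ℝ) :
    Real.exp (c * x) * gaussianPDFReal Mm v x
      = Real.exp (c * Mm + c ^ 2 * v / 2) * gaussianPDFReal (Mm + c * v) v x := by
  have hv' : 0 < (v : ℝ) := lt_of_le_of_ne v.2 (by exact_mod_cast (Ne.symm hv))
  unfold gaussianPDFReal
  rw [mul_left_comm, ← Real.exp_add, mul_left_comm, ← Real.exp_add]
  congr 1
  rw [Real.exp_eq_exp]
  field_simp
  ring

lemma integrable_exp_gaussian (c Mm : ℝ) {v : ℝ≥0} (hv : v ≠ 0) :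
    Integrable (fun x => Real.exp (c * x)) (gaussianReal Mm v) := by
  rw [gaussianReal_of_var_ne_zero _ hv,
    show gaussianPDF Mm v = fun x => ((gaussianPDFReal Mm v x).toNNReal : ℝ≥0∞) from rfl,
    integrable_withDensity_iff_integrable_smul ((measurable_gaussianPDFReal Mm v).real_toNNReal)]
  have : (fun x => ((gaussianPDFReal Mm v x).toNNReal : ℝ≥0) • Real.exp (c * x))
      = fun x => Real.exp (c * Mm + c ^ 2 * v / 2) * gaussianPDFReal (Mm + c * v) v x := by
    funext x
    rw [NNReal.smul_def, smul_eq_mul, Real.coe_toNNReal _ (gaussianPDFReal_nonneg Mm v x), mul_comm]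
    exact gauss_exp_pdf c Mm hv x
  rw [this]
  exact (integrable_gaussianPDFReal _ v).const_mul _

lemma integral_exp_gaussian (c Mm : ℝ) {v : ℝ≥0} (hv : v ≠ 0) :
    ∫ x, Real.exp (c * x) ∂(gaussianReal Mm v) = Real.exp (c * Mm + c ^ 2 * v / 2) := by
  rw [gaussianReal_of_var_ne_zero _ hv,
    show gaussianPDF Mm v = fun x => ((gaussianPDFReal Mm v x).toNNReal : ℝ≥0∞) from rfl,
    integral_withDensity_eq_integral_smul ((measurable_gaussianPDFReal Mm v).real_toNNReal)]
  calc ∫ x, ((gaussianPDFReal Mm v x).toNNReal : ℝ≥0) • Real.exp (c * x)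
      = ∫ x, Real.exp (c * Mm + c ^ 2 * v / 2) * gaussianPDFReal (Mm + c * v) v x := by
        congr 1; funext x
        rw [NNReal.smul_def, smul_eq_mul, Real.coe_toNNReal _ (gaussianPDFReal_nonneg Mm v x), mul_comm]
        exact gauss_exp_pdf c Mm hv x
    _ = Real.exp (c * Mm + c ^ 2 * v / 2) := by
        rw [integral_const_mul, integral_gaussianPDFReal_eq_one _ hv, mul_one]

/-- The threshold `k₁ = (4αγ/(1-γ))^{γ/(1+γ)}`. -/
noncomputable def k₁ (γ α : ℝ) : ℝ := (4 * α * γ / (1 - γ)) ^ (γ / (1 + γ))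

/-- The pointwise maximizer in the low-tolerance case `k₁ < 2αB`. -/
noncomputable def xstar (γ α B y : ℝ) : ℝ :=
  if y ≤ k₁ γ α then y ^ (-(1 / γ))
  else if y ≤ 2 * α * B then -y / (2 * α)
  else -B

section xstar
variable {γ α B y y₁ y₂ : ℝ}

lemma k₁_pos (hγ0 : 0 < γ) (hγ1 : γ < 1) (hα : 0 < α) : 0 < k₁ γ α :=
  Real.rpow_pos_of_pos (div_pos (by positivity) (by linarith)) _

lemma xstar_of_le (h : y ≤ k₁ γ α) : xstar γ α B y = y ^ (-(1 / γ)) := if_pos h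

lemma xstar_of_mid (h1 : ¬ y ≤ k₁ γ α) (h2 : y ≤ 2 * α * B) :
    xstar γ α B y = -y / (2 * α) := by unfold xstar; rw [if_neg h1, if_pos h2]

lemma xstar_of_gt (hk : k₁ γ α < 2 * α * B) (h : 2 * α * B < y) : xstar γ α B y = -B := by
  unfold xstar; rw [if_neg (by linarith), if_neg (not_le.2 h)]

lemma xstar_le_rpow (hγ0 : 0 < γ) (hγ1 : γ < 1) (hα : 0 < α) (hB : 0 < B) (hy : 0 < y) :
    xstar γ α B y ≤ y ^ (-(1 / γ)) := by
  have h0 : (0:ℝ) ≤ y ^ (-(1 / γ)) := Real.rpow_nonneg hy.le _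
  unfold xstar
  split_ifs with h1 h2
  · exact le_refl _
  · have hk := k₁_pos hγ0 hγ1 hα
    have : 0 < y / (2 * α) := div_pos hy (by linarith)
    rw [neg_div]; linarith
  · linarith

lemma neg_B_le_xstar (hγ0 : 0 < γ) (hγ1 : γ < 1) (hα : 0 < α) (hB : 0 < B) (hy : 0 < y) :
    -B ≤ xstar γ α B y := by
  unfold xstar
  split_ifs with h1 h2
  · have := Real.rpow_nonneg hy.le (-(1 / γ)); linarith
  · rw [neg_div, neg_le_neg_iff, div_le_iff₀ (by linarith : (0:ℝ) < 2 * α)]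
    linarith
  · exact le_refl _

lemma xstar_strict (hγ0 : 0 < γ) (hγ1 : γ < 1) (hα : 0 < α) (hB : 0 < B)
    (h1 : 0 < y₁) (h12 : y₁ < y₂) (h2 : y₂ ≤ 2 * α * B) :
    xstar γ α B y₂ < xstar γ α B y₁ := by
  have hk1 : 0 < k₁ γ α := k₁_pos hγ0 hγ1 hα
  have hexp : -(1 / γ) < 0 := by
    have : 0 < 1 / γ := by positivity
    linarith
  by_cases ha : y₂ ≤ k₁ γ α
  · rw [xstar_of_le (le_trans h12.le ha), xstar_of_le ha]
    exact Real.rpow_lt_rpow_of_neg h1 h12 hexp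
  · rw [xstar_of_mid ha h2]
    by_cases hb : y₁ ≤ k₁ γ α
    · rw [xstar_of_le hb]
      have hpos : 0 < y₁ ^ (-(1 / γ)) := Real.rpow_pos_of_pos h1 _
      have hy2 : 0 < y₂ := lt_trans hk1 (not_le.1 ha)
      have : 0 < y₂ / (2 * α) := div_pos hy2 (by linarith)
      rw [neg_div]; linarith
    · rw [xstar_of_mid hb (le_trans h12.le h2), neg_div, neg_div, neg_lt_neg_iff]
      exact (div_lt_div_iff_of_pos_right (by linarith : (0:ℝ) < 2 * α)).2 h12

lemma xstar_anti (hγ0 : 0 < γ) (hγ1 : γ < 1) (hα : 0 < α) (hB : 0 < B)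
    (hk : k₁ γ α < 2 * α * B)
    (h1 : 0 < y₁) (h12 : y₁ ≤ y₂) : xstar γ α B y₂ ≤ xstar γ α B y₁ := by
  rcases eq_or_lt_of_le h12 with rfl | hlt
  · exact le_refl _
  by_cases h2 : y₂ ≤ 2 * α * B
  · exact (xstar_strict hγ0 hγ1 hα hB h1 hlt h2).le
  · rw [xstar_of_gt hk (not_le.1 h2)]
    exact neg_B_le_xstar hγ0 hγ1 hα hB h1

lemma xstar_measurable : Measurable (xstar γ α B) := by
  unfold xstar
  refine Measurable.ite (measurableSet_le measurable_id measurable_const) ?_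
    (Measurable.ite (measurableSet_le measurable_id measurable_const) ?_ measurable_const)
  · exact (by fun_prop : Measurable fun y : ℝ => y ^ (-(1/γ)))
  · exact measurable_id.neg.div_const _

lemma xstar_continuousAt (hγ0 : 0 < γ) (hγ1 : γ < 1) (hα : 0 < α) (hB : 0 < B)
    (hy : 0 < y) (hne : y ≠ k₁ γ α) : ContinuousAt (xstar γ α B) y := by
  rcases hne.lt_or_gt with h | h
  · have hev : xstar γ α B =ᶠ[nhds y] fun z => z ^ (-(1 / γ)) := by
      filter_upwards [Iio_mem_nhds h] with z hz
      exact xstar_of_le (le_of_lt hz)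
    exact (Real.continuousAt_rpow_const y _ (Or.inl hy.ne')).congr hev.symm
  · have hcont : Continuous (fun z : ℝ => if z ≤ 2 * α * B then -z / (2 * α) else -B) := by
      refine Continuous.if_le (continuous_id.neg.div_const _) continuous_const
        continuous_id continuous_const ?_
      intro z hz
      rw [hz]
      field_simp
    have hev : xstar γ α B =ᶠ[nhds y]
        fun z => if z ≤ 2 * α * B then -z / (2 * α) else -B := by
      filter_upwards [Ioi_mem_nhds h] with z hz
      unfold xstar
      rw [if_neg (not_le.2 hz)]
    exact hcont.continuousAt.congr hev.symm

lemma integrand_bound (hγ0 : 0 < γ) (hγ1 : γ < 1) (hα : 0 < α) (hB : 0 < B)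
    {β c : ℝ} (hc : 0 < c) (hβ : c ≤ β) (t : ℝ) :
    |Real.exp t * xstar γ α B (β * Real.exp t)|
      ≤ B * Real.exp t + c ^ (-(1 / γ)) * Real.exp ((1 - 1 / γ) * t) := by
  have hβ' : 0 < β := lt_of_lt_of_le hc hβ
  have het : 0 < Real.exp t := Real.exp_pos t
  have hy : 0 < β * Real.exp t := by positivity
  have hE2 : 0 < Real.exp ((-(1 / γ)) * t) := Real.exp_pos _
  have hexpneg : -(1 / γ) ≤ 0 := by
    have : 0 < 1 / γ := by positivity
    linarith
  have h1 : -B ≤ xstar γ α B (β * Real.exp t) := neg_B_le_xstar hγ0 hγ1 hα hB hy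
  have h2 : xstar γ α B (β * Real.exp t) ≤ (β * Real.exp t) ^ (-(1 / γ)) :=
    xstar_le_rpow hγ0 hγ1 hα hB hy
  have h3 : (β * Real.exp t) ^ (-(1 / γ))
      = β ^ (-(1 / γ)) * Real.exp ((-(1 / γ)) * t) := by
    rw [Real.mul_rpow hβ'.le het.le, Real.rpow_def_of_pos het, Real.log_exp, mul_comm t]
  have h4 : β ^ (-(1 / γ)) ≤ c ^ (-(1 / γ)) := Real.rpow_le_rpow_of_nonpos hc hβ hexpneg
  have h5 : Real.exp ((1 - 1 / γ) * t) = Real.exp t * Real.exp ((-(1 / γ)) * t) := by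
    rw [← Real.exp_add]; congr 1; ring
  have hcp : 0 ≤ c ^ (-(1 / γ)) := Real.rpow_nonneg hc.le _
  rw [abs_le, h5]
  constructor
  · have := mul_le_mul_of_nonneg_left h1 het.le
    nlinarith [mul_nonneg hcp (mul_pos het hE2).le]
  · have hx : xstar γ α B (β * Real.exp t)
        ≤ c ^ (-(1 / γ)) * Real.exp ((-(1 / γ)) * t) := by
      rw [h3] at h2
      exact le_trans h2 (mul_le_mul_of_nonneg_right h4 hE2.le)
    have := mul_le_mul_of_nonneg_left hx het.le
    nlinarith [mul_pos hB het]
end xstar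

/-- `g(β) = ∫ eᵗ · x*(β eᵗ) dμ(t)` where `μ` is Gaussian with mean `M`, variance `V²`. -/
noncomputable def gfun (γ α B M V β : ℝ) : ℝ :=
  ∫ t, Real.exp t * xstar γ α B (β * Real.exp t)
    ∂(gaussianReal M ⟨V ^ 2, sq_nonneg V⟩)

section main
variable {γ α B M V : ℝ}

lemma hv_ne (hV : 0 < V) : (⟨V ^ 2, sq_nonneg V⟩ : ℝ≥0) ≠ 0 := by
  intro h
  have : V ^ 2 = 0 := congrArg NNReal.toReal h
  exact (pow_ne_zero 2 hV.ne') this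

lemma gauss_ne_zero (hV : 0 < V) {s : Set ℝ} (hs : volume s ≠ 0) :
    gaussianReal M ⟨V ^ 2, sq_nonneg V⟩ s ≠ 0 := fun h0 =>
  hs (gaussianReal_absolutelyContinuous' M (hv_ne hV) h0)

lemma meas_integrand (β : ℝ) :
    AEStronglyMeasurable (fun t => Real.exp t * xstar γ α B (β * Real.exp t))
      (gaussianReal M ⟨V ^ 2, sq_nonneg V⟩) :=
  (Real.measurable_exp.mul
    (xstar_measurable.comp (measurable_const.mul Real.measurable_exp))).aestronglyMeasurable

lemma integrable_bound_fn (hγ0 : 0 < γ) (hγ1 : γ < 1) (hV : 0 < V) (c : ℝ) :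
    Integrable (fun t => B * Real.exp t + c ^ (-(1 / γ)) * Real.exp ((1 - 1 / γ) * t))
      (gaussianReal M ⟨V ^ 2, sq_nonneg V⟩) := by
  have h1 : Integrable (fun t => Real.exp t) (gaussianReal M ⟨V ^ 2, sq_nonneg V⟩) := by
    simpa using integrable_exp_gaussian 1 M (hv_ne hV)
  exact (h1.const_mul B).add ((integrable_exp_gaussian _ M (hv_ne hV)).const_mul _)

lemma integrable_integrand (hγ0 : 0 < γ) (hγ1 : γ < 1) (hα : 0 < α) (hB : 0 < B)
    (hV : 0 < V) {β : ℝ} (hβ : 0 < β) :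
    Integrable (fun t => Real.exp t * xstar γ α B (β * Real.exp t))
      (gaussianReal M ⟨V ^ 2, sq_nonneg V⟩) := by
  refine (integrable_bound_fn (B := B) hγ0 hγ1 hV β).mono' (meas_integrand β) ?_
  exact ae_of_all _ fun t => by
    simpa only [Real.norm_eq_abs] using integrand_bound hγ0 hγ1 hα hB hβ le_rfl t

lemma part_cont (hγ0 : 0 < γ) (hγ1 : γ < 1) (hα : 0 < α) (hB : 0 < B) (hV : 0 < V) :
    ContinuousOn (gfun γ α B M V) (Set.Ioi 0) := by
  intro β₀ hβ₀
  apply ContinuousAt.continuousWithinAt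
  have hβ₀' : (0:ℝ) < β₀ := hβ₀
  have h2 : (0:ℝ) < β₀ / 2 := by linarith
  have hnull : ∀ᵐ t ∂(gaussianReal M ⟨V ^ 2, sq_nonneg V⟩),
      β₀ * Real.exp t ≠ k₁ γ α := by
    rw [ae_iff]
    have hsub : {t : ℝ | ¬ β₀ * Real.exp t ≠ k₁ γ α} ⊆ {Real.log (k₁ γ α / β₀)} := by
      intro t ht
      simp only [Set.mem_setOf_eq, not_not] at ht
      have hexp : Real.exp t = k₁ γ α / β₀ := by
        rw [eq_div_iff hβ₀'.ne', mul_comm]; exact ht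
      show t = Real.log (k₁ γ α / β₀)
      rw [← Real.log_exp t, hexp]
    have : gaussianReal M ⟨V ^ 2, sq_nonneg V⟩ {Real.log (k₁ γ α / β₀)} = 0 :=
      gaussianReal_absolutelyContinuous M (hv_ne hV) (volume_singleton)
    exact measure_mono_null hsub this
  have := continuousAt_of_dominated
    (F := fun (β : ℝ) t => Real.exp t * xstar γ α B (β * Real.exp t))
    (μ := gaussianReal M ⟨V ^ 2, sq_nonneg V⟩)
    (x₀ := β₀)
    (bound := fun t => B * Real.exp t + (β₀ / 2) ^ (-(1 / γ)) * Real.exp ((1 - 1 / γ) * t))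
    (Eventually.of_forall fun β => meas_integrand β)
    ?_ (integrable_bound_fn hγ0 hγ1 hV _) ?_
  · exact this
  · filter_upwards [Ioi_mem_nhds (show β₀ / 2 < β₀ by linarith)] with β hβ
    exact ae_of_all _ fun t => by
      simpa only [Real.norm_eq_abs] using integrand_bound hγ0 hγ1 hα hB h2 (le_of_lt hβ) t
  · filter_upwards [hnull] with t ht
    have hy : 0 < β₀ * Real.exp t := by positivity
    have hinner : ContinuousAt (fun β : ℝ => β * Real.exp t) β₀ :=
      (continuous_mul_right _).continuousAt
    exact continuousAt_const.mul
      (ContinuousAt.comp (x := β₀) (xstar_continuousAt hγ0 hγ1 hα hB hy ht) hinner)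

lemma part_anti (hγ0 : 0 < γ) (hγ1 : γ < 1) (hα : 0 < α) (hB : 0 < B) (hV : 0 < V)
    (hk : k₁ γ α < 2 * α * B) :
    StrictAntiOn (gfun γ α B M V) (Set.Ioi 0) := by
  intro a ha b hb hab
  have ha' : (0:ℝ) < a := ha
  have hb' : (0:ℝ) < b := hb
  have hfa := integrable_integrand hγ0 hγ1 hα hB hV (M := M) ha'
  have hfb := integrable_integrand hγ0 hγ1 hα hB hV (M := M) hb'
  have key : 0 < ∫ t, (Real.exp t * xstar γ α B (a * Real.exp t)
      - Real.exp t * xstar γ α B (b * Real.exp t))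
      ∂(gaussianReal M ⟨V ^ 2, sq_nonneg V⟩) := by
    have h0 : (0 : ℝ → ℝ) ≤ᵐ[gaussianReal M ⟨V ^ 2, sq_nonneg V⟩] fun t =>
        Real.exp t * xstar γ α B (a * Real.exp t)
          - Real.exp t * xstar γ α B (b * Real.exp t) := by
      refine ae_of_all _ fun t => sub_nonneg.2 ?_
      exact mul_le_mul_of_nonneg_left
        (xstar_anti hγ0 hγ1 hα hB hk (by positivity)
          (by have := (Real.exp_pos t).le; nlinarith)) (Real.exp_pos t).le
    have hi : Integrable (fun t => Real.exp t * xstar γ α B (a * Real.exp t)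
        - Real.exp t * xstar γ α B (b * Real.exp t))
        (gaussianReal M ⟨V ^ 2, sq_nonneg V⟩) := hfa.sub hfb
    rw [integral_pos_iff_support_of_nonneg_ae h0 hi]
    · refine lt_of_lt_of_le ?_ (measure_mono (?_ :
        Set.Iio (Real.log (2 * α * B / b)) ⊆ _))
      · refine pos_iff_ne_zero.2 (gauss_ne_zero hV ?_)
        rw [Real.volume_Iio]
        exact ENNReal.top_ne_zero
      · intro t ht
        have hX : (0:ℝ) < 2 * α * B / b := by positivity
        have h1 : b * Real.exp t < 2 * α * B := by
          have : Real.exp t < 2 * α * B / b := by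
            rw [← Real.exp_log hX]
            exact Real.exp_lt_exp.2 ht
          rw [lt_div_iff₀ hb'] at this
          linarith [this]
        have hstr := xstar_strict hγ0 hγ1 hα hB (by positivity : 0 < a * Real.exp t)
          (by have := Real.exp_pos t; nlinarith : a * Real.exp t < b * Real.exp t) h1.le
        have : 0 < Real.exp t * xstar γ α B (a * Real.exp t)
            - Real.exp t * xstar γ α B (b * Real.exp t) := by
          have := Real.exp_pos t; nlinarith
        exact Function.mem_support.2 this.ne'
  rw [integral_sub hfa hfb] at key
  simp only [gfun]
  linarith

lemma part_lim0 (hγ0 : 0 < γ) (hγ1 : γ < 1) (hα : 0 < α) (hB : 0 < B) (hV : 0 < V)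
    (hk : k₁ γ α < 2 * α * B) :
    Tendsto (gfun γ α B M V) (nhdsWithin 0 (Set.Ioi 0)) atTop := by
  set μ := gaussianReal M ⟨V ^ 2, sq_nonneg V⟩ with hμdef
  set C1 := ∫ t in Set.Iic 0, Real.exp ((1 - 1 / γ) * t) ∂μ with hC1def
  have hexp2 : Integrable (fun t => Real.exp ((1 - 1 / γ) * t)) μ :=
    integrable_exp_gaussian _ M (hv_ne hV)
  have hexp1 : Integrable (fun t => Real.exp t) μ := by
    simpa using integrable_exp_gaussian 1 M (hv_ne hV)
  have hC1pos : 0 < C1 := by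
    rw [hC1def, setIntegral_pos_iff_support_of_nonneg_ae
      (ae_of_all _ fun t => (Real.exp_pos _).le) hexp2.integrableOn]
    have hsupp : Function.support (fun t : ℝ => Real.exp ((1 - 1 / γ) * t)) = Set.univ :=
      Set.eq_univ_of_forall fun t => Real.exp_ne_zero _
    rw [hsupp, Set.univ_inter]
    refine pos_iff_ne_zero.2 (gauss_ne_zero hV ?_)
    rw [Real.volume_Iic]
    exact ENNReal.top_ne_zero
  have hlow : ∀ β : ℝ, 0 < β → β ≤ k₁ γ α →
      C1 * β ^ (-(1 / γ)) - B * Real.exp (M + V ^ 2 / 2) ≤ gfun γ α B M V β := by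
    intro β hβ hβk
    have hind : Integrable
        (fun t => (Set.Iic (0:ℝ)).indicator (fun t => Real.exp ((1 - 1 / γ) * t)) t) μ :=
      hexp2.indicator measurableSet_Iic
    have hLint : Integrable (fun t => β ^ (-(1 / γ)) *
        (Set.Iic (0:ℝ)).indicator (fun t => Real.exp ((1 - 1 / γ) * t)) t
        - B * Real.exp t) μ := (hind.const_mul _).sub (hexp1.const_mul B)
    have hle : ∀ t, β ^ (-(1 / γ)) *
        (Set.Iic (0:ℝ)).indicator (fun t => Real.exp ((1 - 1 / γ) * t)) t
        - B * Real.exp t ≤ Real.exp t * xstar γ α B (β * Real.exp t) := by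
      intro t
      have het := Real.exp_pos t
      by_cases ht : t ≤ 0
      · rw [Set.indicator_of_mem (Set.mem_Iic.2 ht)]
        have hy : β * Real.exp t ≤ k₁ γ α := by
          have h1 : Real.exp t ≤ 1 := Real.exp_le_one_iff.2 ht
          nlinarith
        rw [xstar_of_le hy]
        have hrw : Real.exp t * (β * Real.exp t) ^ (-(1 / γ))
            = β ^ (-(1 / γ)) * Real.exp ((1 - 1 / γ) * t) := by
          rw [Real.mul_rpow hβ.le het.le, Real.rpow_def_of_pos het, Real.log_exp,
            mul_left_comm, ← Real.exp_add,
            show t + t * -(1 / γ) = (1 - 1 / γ) * t by ring]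
        rw [← hrw]
        nlinarith [mul_pos hB het]
      · rw [Set.indicator_of_notMem (by simpa using ht)]
        have h1 : Real.exp t * (-B) ≤ Real.exp t * xstar γ α B (β * Real.exp t) :=
          mul_le_mul_of_nonneg_left
            (neg_B_le_xstar hγ0 hγ1 hα hB (by positivity)) het.le
        nlinarith [h1]
    have hmono := integral_mono hLint
      (integrable_integrand hγ0 hγ1 hα hB hV (M := M) hβ) hle
    rw [integral_sub (hind.const_mul _) (hexp1.const_mul B), integral_const_mul,
      integral_const_mul, integral_indicator measurableSet_Iic] at hmono
    have hie : ∫ t, Real.exp t ∂μ = Real.exp (M + V ^ 2 / 2) := by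
      have := integral_exp_gaussian 1 M (hv_ne hV)
      simp only [one_mul, one_pow, mul_one] at this
      exact this
    rw [hie] at hmono
    calc C1 * β ^ (-(1 / γ)) - B * Real.exp (M + V ^ 2 / 2)
        = β ^ (-(1 / γ)) * C1 - B * Real.exp (M + V ^ 2 / 2) := by ring
      _ ≤ gfun γ α B M V β := hmono
  have htend : Tendsto (fun β : ℝ => C1 * β ^ (-(1 / γ)) - B * Real.exp (M + V ^ 2 / 2))
      (nhdsWithin 0 (Set.Ioi 0)) atTop := by
    apply tendsto_atTop_add_const_right
    apply Tendsto.const_mul_atTop hC1pos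
    have h2 : Tendsto (fun β : ℝ => (β⁻¹) ^ (1 / γ)) (nhdsWithin 0 (Set.Ioi 0)) atTop :=
      (tendsto_rpow_atTop (by positivity)).comp tendsto_inv_nhdsGT_zero
    apply h2.congr'
    filter_upwards [self_mem_nhdsWithin] with β hβ
    have hβ' : (0:ℝ) < β := hβ
    rw [Real.inv_rpow hβ'.le, ← Real.rpow_neg hβ'.le]
  refine tendsto_atTop_mono' _ ?_ htend
  have hmem : Set.Iio (k₁ γ α) ∈ nhdsWithin (0:ℝ) (Set.Ioi 0) :=
    nhdsWithin_le_nhds (Iio_mem_nhds (k₁_pos hγ0 hγ1 hα))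
  filter_upwards [self_mem_nhdsWithin, hmem] with β hβ hβk
  exact hlow β hβ hβk.le


lemma part_limtop (hγ0 : 0 < γ) (hγ1 : γ < 1) (hα : 0 < α) (hB : 0 < B) (hV : 0 < V)
    (hk : k₁ γ α < 2 * α * B) :
    Tendsto (gfun γ α B M V) atTop (nhds (-B * Real.exp (M + V ^ 2 / 2))) := by
  have key : Tendsto (fun β : ℝ => ∫ t, Real.exp t * xstar γ α B (β * Real.exp t)
        ∂(gaussianReal M ⟨V ^ 2, sq_nonneg V⟩)) atTop
      (nhds (∫ t, Real.exp t * (-B) ∂(gaussianReal M ⟨V ^ 2, sq_nonneg V⟩))) := by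
    refine tendsto_integral_filter_of_dominated_convergence
      (bound := fun t => B * Real.exp t + (1:ℝ) ^ (-(1 / γ)) * Real.exp ((1 - 1 / γ) * t))
      (Eventually.of_forall fun β => meas_integrand β) ?_
      (integrable_bound_fn hγ0 hγ1 hV 1) ?_
    · filter_upwards [eventually_ge_atTop (1:ℝ)] with β hβ
      exact ae_of_all _ fun t => by
        simpa only [Real.norm_eq_abs] using integrand_bound hγ0 hγ1 hα hB one_pos hβ t
    · refine ae_of_all _ fun t => ?_
      have hev : (fun β => Real.exp t * xstar γ α B (β * Real.exp t))
          =ᶠ[(atTop : Filter ℝ)] fun _ => Real.exp t * (-B) := by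
        filter_upwards [eventually_gt_atTop ((2 * α * B) / Real.exp t)] with β hβ
        rw [xstar_of_gt hk ((div_lt_iff₀ (Real.exp_pos t)).1 hβ)]
      exact Tendsto.congr' hev.symm tendsto_const_nhds
  have heq : ∫ t, Real.exp t * (-B) ∂(gaussianReal M ⟨V ^ 2, sq_nonneg V⟩)
      = -B * Real.exp (M + V ^ 2 / 2) := by
    rw [integral_mul_const]
    have hie : ∫ t, Real.exp t ∂(gaussianReal M ⟨V ^ 2, sq_nonneg V⟩)
        = Real.exp (M + V ^ 2 / 2) := by
      have := integral_exp_gaussian 1 M (hv_ne hV)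
      simp only [one_mul, one_pow, mul_one] at this
      exact this
    rw [hie]; ring
  rw [heq] at key
  exact key


end main

theorem stmt9 (γ α B M V : ℝ) (hγ0 : 0 < γ) (hγ1 : γ < 1) (hα : 0 < α) (hB : 0 < B)
    (hV : 0 < V) (hk : k₁ γ α < 2 * α * B) :
    ContinuousOn (gfun γ α B M V) (Set.Ioi 0) ∧
    StrictAntiOn (gfun γ α B M V) (Set.Ioi 0) ∧
    Tendsto (gfun γ α B M V) (nhdsWithin 0 (Set.Ioi 0)) atTop ∧
    Tendsto (gfun γ α B M V) atTop (nhds (-B * Real.exp (M + V ^ 2 / 2))) ∧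
    (∀ Y₀ : ℝ, -B * Real.exp (M + V ^ 2 / 2) < Y₀ →
      ∃! β : ℝ, 0 < β ∧ gfun γ α B M V β = Y₀) := by
  have hcont := part_cont (M := M) (V := V) hγ0 hγ1 hα hB hV
  have hanti := part_anti (M := M) (V := V) hγ0 hγ1 hα hB hV hk
  have hlim0 := part_lim0 (M := M) (V := V) hγ0 hγ1 hα hB hV hk
  have hlimtop := part_limtop (M := M) (V := V) hγ0 hγ1 hα hB hV hk
  refine ⟨hcont, hanti, hlim0, hlimtop, ?_⟩
  intro Y₀ hY
  obtain ⟨b, hb2, hb1⟩ : ∃ b : ℝ, gfun γ α B M V b < Y₀ ∧ 0 < b :=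
    ((hlimtop.eventually_lt_const hY).and (eventually_gt_atTop 0)).exists
  obtain ⟨a, ha2, ha1⟩ : ∃ a : ℝ, Y₀ < gfun γ α B M V a ∧ a ∈ Set.Ioi (0:ℝ) :=
    ((hlim0.eventually_gt_atTop Y₀).and eventually_mem_nhdsWithin).exists
  have ha1' : (0:ℝ) < a := ha1
  have hab : a < b := by
    by_contra h
    push_neg at h
    rcases eq_or_lt_of_le h with heq | hlt
    · rw [heq] at hb2; linarith
    · have := hanti (Set.mem_Ioi.2 hb1) ha1 hlt
      linarith
  have hIcc : Set.Icc a b ⊆ Set.Ioi 0 := fun x hx => lt_of_lt_of_le ha1' hx.1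
  obtain ⟨β, hβmem, hβeq⟩ :=
    intermediate_value_Icc' hab.le (hcont.mono hIcc) ⟨hb2.le, ha2.le⟩
  have hβpos : (0:ℝ) < β := lt_of_lt_of_le ha1' hβmem.1
  refine ⟨β, ⟨hβpos, hβeq⟩, ?_⟩
  rintro β' ⟨hβ'pos, hβ'eq⟩
  by_contra hne
  rcases lt_or_gt_of_ne hne with h | h
  · have := hanti (Set.mem_Ioi.2 hβ'pos) (Set.mem_Ioi.2 hβpos) h
    rw [hβeq, hβ'eq] at this
    exact lt_irrefl _ this
  · have := hanti (Set.mem_Ioi.2 hβpos) (Set.mem_Ioi.2 hβ'pos) h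
    rw [hβeq, hβ'eq] at this
    exact lt_irrefl _ this
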